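/- For every natural number m, the finite simple continued fraction [29,29,…,29] consisting of m+1 twenty-nines equals F_{7m+14}/F_{7m+7}. -/

import Mathlib

def cf : List ℤ → ℚ
  | [] => 0
  | [a] => (a : ℚ)
  | a :: b :: l => (a : ℚ) + (cf (b :: l))⁻¹

/-! The continued fraction `[a, …, a]` with `m + 1` entries is `u (m + 2) / u (m + 1)` for any
nonvanishing solution of `u (n + 2) = a * u (n + 1) + u n` with `u 0 = 0`. The sequence
`u n = F (7 n)` is such a solution for `a = 29`, because `F (n + 14) = L₇ F (n + 7) + F n` with the
Lucas number `L₇ = 29` (the sign is `+` since `7` is odd). -/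

lemma cf_cons {l : List ℤ} (hl : l ≠ []) (a : ℤ) : cf (a :: l) = a + (cf l)⁻¹ := by
  obtain ⟨b, l, rfl⟩ := List.exists_cons_of_ne_nil hl
  rfl

theorem cf_replicate_eq_div {a : ℤ} {u : ℕ → ℚ} (hu₀ : u 0 = 0)
    (hu : ∀ n, u (n + 2) = a * u (n + 1) + u n) (hne : ∀ n, u (n + 1) ≠ 0) (m : ℕ) :
    cf (List.replicate (m + 1) a) = u (m + 2) / u (m + 1) := by
  induction m with
  | zero =>
    rw [hu, hu₀, add_zero, mul_div_cancel_right₀ _ (hne 0)]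
    rfl
  | succ m ih =>
    rw [List.replicate_succ, cf_cons (by simp), ih, inv_div, hu (m + 1)]
    field_simp [hne m, hne (m + 1)]

theorem Nat.fib_add_fourteen (n : ℕ) : fib (n + 14) = 29 * fib (n + 7) + fib n := by
  simp only [fib_add_two]
  ring

theorem cf_all_twentynines_fib (m : ℕ) :
    cf (List.replicate (m + 1) 29) =
      (Nat.fib (7 * m + 14) : ℚ) / (Nat.fib (7 * m + 7) : ℚ) := by
  refine cf_replicate_eq_div (u := fun n => (Nat.fib (7 * n) : ℚ)) (by simp) (fun n => ?_)
    (fun n => ?_) m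
  · have h := Nat.fib_add_fourteen (7 * n)
    rw [show 7 * (n + 2) = 7 * n + 14 by ring, show 7 * (n + 1) = 7 * n + 7 by ring, h]
    push_cast
    ring
  · exact_mod_cast (Nat.fib_pos.mpr (by omega)).ne'
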